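/- Let R = ℤ₂[h, r]/(h⁶, 2r, rh³, r²) with deg h = 2, deg r = 4. Then the torsion submodule of R as a ℤ₂-module is spanned by r, rh, rh² and is isomorphic to (ℤ/2)³. -/

import Mathlib

set_option synthInstance.maxHeartbeats 400000
set_option maxHeartbeats 800000

open MvPolynomial

/-- `R = ℤ₂[h, r]/(h⁶, 2r, rh³, r²)`, with `h = X 0`, `r = X 1`. -/
noncomputable abbrev RQ5 : Type :=
  MvPolynomial (Fin 2) ℤ_[2] ⧸
    Ideal.span ({X 0 ^ 6, 2 * X 1, X 1 * X 0 ^ 3, X 1 ^ 2} :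
      Set (MvPolynomial (Fin 2) ℤ_[2]))

namespace Q5aux

noncomputable abbrev Iq : Ideal (MvPolynomial (Fin 2) ℤ_[2]) :=
  Ideal.span ({X 0 ^ 6, 2 * X 1, X 1 * X 0 ^ 3, X 1 ^ 2} :
      Set (MvPolynomial (Fin 2) ℤ_[2]))

noncomputable def hbar : RQ5 := Ideal.Quotient.mk Iq (X 0)
noncomputable def rbar : RQ5 := Ideal.Quotient.mk Iq (X 1)

lemma hbar_pow_six : hbar ^ 6 = 0 := by
  rw [hbar, ← map_pow, Ideal.Quotient.eq_zero_iff_mem]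
  exact Ideal.subset_span (by simp)

lemma two_mul_rbar : 2 * rbar = 0 := by
  rw [rbar, show (2 : RQ5) = Ideal.Quotient.mk Iq 2 from rfl, ← map_mul,
    Ideal.Quotient.eq_zero_iff_mem]
  exact Ideal.subset_span (by simp)

lemma rbar_mul_hbar_cube : rbar * hbar ^ 3 = 0 := by
  rw [rbar, hbar, ← map_pow, ← map_mul, Ideal.Quotient.eq_zero_iff_mem]
  exact Ideal.subset_span (by simp)

lemma rbar_sq : rbar * rbar = 0 := by
  rw [rbar, ← map_mul, ← sq, Ideal.Quotient.eq_zero_iff_mem]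
  exact Ideal.subset_span (by simp)

noncomputable abbrev A := AdjoinRoot (Polynomial.X ^ 6 : Polynomial ℤ_[2])
noncomputable abbrev ρ : A := AdjoinRoot.root _
noncomputable abbrev J : Ideal A := Ideal.span {2, ρ ^ 3}
noncomputable abbrev T := A ⧸ J
noncomputable abbrev M := TrivSqZeroExt A T

lemma rho_pow_six : ρ ^ 6 = 0 := by
  have := AdjoinRoot.mk_self (f := (Polynomial.X ^ 6 : Polynomial ℤ_[2]))
  rwa [map_pow, AdjoinRoot.mk_X] at this

noncomputable def σA : A →ₐ[ℤ_[2]] RQ5 :=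
  AdjoinRoot.liftAlgHom _ (Algebra.ofId ℤ_[2] RQ5) hbar (by
    rw [Polynomial.eval₂_X_pow]
    exact hbar_pow_six)

lemma σA_root : σA ρ = hbar := AdjoinRoot.liftAlgHom_root _ _ _ _

lemma σA_J_mul_rbar (a : A) (ha : a ∈ J) : σA a * rbar = 0 := by
  obtain ⟨u, v, huv⟩ := Ideal.mem_span_pair.mp ha
  rw [← huv, map_add, map_mul, map_mul, map_pow, σA_root, add_mul, map_ofNat]
  have h1 : σA u * 2 * rbar = 0 := by
    rw [mul_assoc, two_mul_rbar, mul_zero]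
  have h2 : σA v * hbar ^ 3 * rbar = 0 := by
    rw [mul_assoc, mul_comm (hbar ^ 3), rbar_mul_hbar_cube, mul_zero]
  rw [h1, h2, add_zero]

noncomputable def σT : T →ₗ[ℤ_[2]] RQ5 where
  toFun t := Quotient.liftOn' t (fun a => σA a * rbar) (by
    intro a b hab
    have h : a - b ∈ J := by
      rwa [Submodule.quotientRel_def] at hab
    have := σA_J_mul_rbar _ h
    rw [map_sub, sub_mul, sub_eq_zero] at this
    exact this)
  map_add' x y := by
    obtain ⟨a, rfl⟩ := Ideal.Quotient.mk_surjective x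
    obtain ⟨b, rfl⟩ := Ideal.Quotient.mk_surjective y
    show σA (a + b) * rbar = σA a * rbar + σA b * rbar
    rw [map_add, add_mul]
  map_smul' z x := by
    obtain ⟨a, rfl⟩ := Ideal.Quotient.mk_surjective x
    show σA (z • a) * rbar = z • (σA a * rbar)
    rw [map_smul, smul_mul_assoc]

lemma σT_mk (a : A) : σT (Ideal.Quotient.mk J a) = σA a * rbar := rfl


open TrivSqZeroExt in
noncomputable def φ : MvPolynomial (Fin 2) ℤ_[2] →ₐ[ℤ_[2]] M :=
  aeval ![TrivSqZeroExt.inl ρ, TrivSqZeroExt.inr (Ideal.Quotient.mk J 1)]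

lemma φ_X0 : φ (X 0) = TrivSqZeroExt.inl ρ := by simp [φ]
lemma φ_X1 : φ (X 1) = TrivSqZeroExt.inr (Ideal.Quotient.mk J 1) := by simp [φ]

lemma two_mem_J : (2 : A) ∈ J := Ideal.subset_span (by simp)
lemma rho3_mem_J : (ρ ^ 3 : A) ∈ J := Ideal.subset_span (by simp)

lemma inr_smul_one (a : A) : a • (Ideal.Quotient.mk J 1 : T) = Ideal.Quotient.mk J a := by
  have : (Ideal.Quotient.mk J (a • (1 : A)) : T) = a • (Ideal.Quotient.mk J 1 : T) :=
    Submodule.Quotient.mk_smul J a 1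
  rw [← this, smul_eq_mul, mul_one]

lemma φ_Iq : ∀ p ∈ Iq, φ p = 0 := by
  have h : Iq ≤ RingHom.ker (φ : MvPolynomial (Fin 2) ℤ_[2] →+* M) := by
    rw [Ideal.span_le]
    rintro p (rfl | rfl | rfl | rfl) <;> simp only [SetLike.mem_coe, RingHom.mem_ker, RingHom.coe_coe]
    · rw [map_pow]
      show (φ (X 0)) ^ 6 = 0
      rw [φ_X0, TrivSqZeroExt.inl_pow, rho_pow_six, TrivSqZeroExt.inl_zero]
    · rw [map_mul, map_ofNat]
      show (2 : M) * φ (X 1) = 0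
      
      rw [φ_X1, two_mul, ← TrivSqZeroExt.inr_add, ← map_add, one_add_one_eq_two,
        Ideal.Quotient.eq_zero_iff_mem.mpr two_mem_J, TrivSqZeroExt.inr_zero]
    · rw [map_mul, map_pow, φ_X0, φ_X1, TrivSqZeroExt.inl_pow,
        TrivSqZeroExt.inr_mul_inl, op_smul_eq_smul, inr_smul_one,
        Ideal.Quotient.eq_zero_iff_mem.mpr rho3_mem_J, TrivSqZeroExt.inr_zero]
    · rw [sq, map_mul, φ_X1, TrivSqZeroExt.inr_mul_inr]
  intro p hp
  exact h hp

noncomputable def ψ : RQ5 →ₐ[ℤ_[2]] M := Ideal.Quotient.liftₐ Iq φ φ_Iq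

lemma ψ_mk (p : MvPolynomial (Fin 2) ℤ_[2]) : ψ (Ideal.Quotient.mk Iq p) = φ p := rfl

noncomputable def σ : M →ₗ[ℤ_[2]] RQ5 where
  toFun m := σA m.fst + σT m.snd
  map_add' x y := by
    simp only [TrivSqZeroExt.fst_add, TrivSqZeroExt.snd_add, map_add]
    ring
  map_smul' z x := by
    simp only [TrivSqZeroExt.fst_smul, TrivSqZeroExt.snd_smul, map_smul, RingHom.id_apply,
      smul_add]

lemma σ_apply (m : M) : σ m = σA m.fst + σT m.snd := rfl

lemma σT_smul (a : A) (t : T) : σT (a • t) = σA a * σT t := by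
  obtain ⟨b, rfl⟩ := Ideal.Quotient.mk_surjective t
  have : (Ideal.Quotient.mk J (a • b) : T) = a • Ideal.Quotient.mk J b :=
    Submodule.Quotient.mk_smul J a b
  rw [← this, σT_mk, σT_mk, smul_eq_mul, map_mul, mul_assoc]

lemma σT_mul_rbar (t : T) : σT t * rbar = 0 := by
  obtain ⟨b, rfl⟩ := Ideal.Quotient.mk_surjective t
  rw [σT_mk, mul_assoc, rbar_sq, mul_zero]

lemma σ_one : σ 1 = 1 := by
  rw [σ_apply, TrivSqZeroExt.fst_one, TrivSqZeroExt.snd_one, map_one, map_zero, add_zero]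

lemma σ_mul_inl_root (m : M) : σ (m * TrivSqZeroExt.inl ρ) = σ m * hbar := by
  rw [σ_apply, σ_apply, TrivSqZeroExt.fst_mul, TrivSqZeroExt.snd_mul,
    TrivSqZeroExt.fst_inl, TrivSqZeroExt.snd_inl, smul_zero, zero_add,
    op_smul_eq_smul, σT_smul, map_mul, σA_root, add_mul]
  ring

lemma σ_mul_inr_one (m : M) :
    σ (m * TrivSqZeroExt.inr (Ideal.Quotient.mk J 1)) = σ m * rbar := by
  rw [σ_apply, σ_apply, TrivSqZeroExt.fst_mul, TrivSqZeroExt.snd_mul,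
    TrivSqZeroExt.fst_inr, TrivSqZeroExt.snd_inr, mul_zero, map_zero, zero_add,
    op_smul_eq_smul, zero_smul, add_zero, inr_smul_one, σT_mk, add_mul,
    σT_mul_rbar, add_zero]

lemma σψ (x : RQ5) : σ (ψ x) = x := by
  obtain ⟨p, rfl⟩ := Ideal.Quotient.mk_surjective x
  induction p using MvPolynomial.induction_on with
  | C a =>
      have h1 : (Ideal.Quotient.mk Iq) (C a) = algebraMap ℤ_[2] RQ5 a := rfl
      rw [h1, AlgHom.commutes, Algebra.algebraMap_eq_smul_one, map_smul, σ_one]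
      exact (Algebra.algebraMap_eq_smul_one a).symm
  | add p q hp hq => rw [map_add, map_add, map_add, hp, hq]
  | mul_X p i hp =>
      rw [map_mul, map_mul]
      fin_cases i <;> simp only [Fin.zero_eta, Fin.mk_one]
      · rw [ψ_mk (X 0), φ_X0, σ_mul_inl_root, hp]; rfl
      · rw [ψ_mk (X 1), φ_X1, σ_mul_inr_one, hp]; rfl

lemma ψ_injective : Function.Injective ψ := by
  intro x y h
  rw [← σψ x, ← σψ y, h]

noncomputable def Sgen : Set RQ5 :=
  {Ideal.Quotient.mk Iq (X 1), Ideal.Quotient.mk Iq (X 1 * X 0),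
    Ideal.Quotient.mk Iq (X 1 * X 0 ^ 2)}

lemma gen_eq0 : Ideal.Quotient.mk Iq (X 1) = rbar * hbar ^ 0 := by
  rw [pow_zero, mul_one]; rfl

lemma gen_eq1 : Ideal.Quotient.mk Iq (X 1 * X 0) = rbar * hbar ^ 1 := by
  rw [map_mul, pow_one]; rfl

lemma gen_eq2 : Ideal.Quotient.mk Iq (X 1 * X 0 ^ 2) = rbar * hbar ^ 2 := by
  rw [map_mul, map_pow]; rfl

lemma mem_span_pow (n : ℕ) : rbar * hbar ^ n ∈ Submodule.span ℤ_[2] Sgen := by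
  match n with
  | 0 => exact Submodule.subset_span (by rw [← gen_eq0]; left; rfl)
  | 1 => exact Submodule.subset_span (by rw [← gen_eq1]; right; left; rfl)
  | 2 => exact Submodule.subset_span (by rw [← gen_eq2]; right; right; rfl)
  | (k+3) =>
    have h : rbar * hbar ^ (k + 3) = (rbar * hbar ^ 3) * hbar ^ k := by ring
    rw [h, rbar_mul_hbar_cube, zero_mul]
    exact Submodule.zero_mem _

noncomputable def bA : Module.Basis (Fin (Polynomial.X ^ 6 : Polynomial ℤ_[2]).natDegree) ℤ_[2] A :=
  (AdjoinRoot.powerBasis' (Polynomial.monic_X_pow 6)).basis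

lemma σT_mem_span (t : T) : σT t ∈ Submodule.span ℤ_[2] Sgen := by
  obtain ⟨a, rfl⟩ := Ideal.Quotient.mk_surjective t
  obtain ⟨P, rfl⟩ := AdjoinRoot.mk_surjective a
  rw [σT_mk, σA]
  rw [AdjoinRoot.liftAlgHom_mk]
  show (Polynomial.aeval hbar) P * rbar ∈ _
  induction P using Polynomial.induction_on with
  | C a =>
      rw [Polynomial.aeval_C, Algebra.algebraMap_eq_smul_one, smul_mul_assoc, one_mul]
      exact Submodule.smul_mem _ _ (Submodule.subset_span (Or.inl rfl))
  | add p q hp hq =>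
      rw [map_add, add_mul]
      exact Submodule.add_mem _ hp hq
  | monomial n a _ =>
      have h : (Polynomial.aeval hbar) (Polynomial.C a * Polynomial.X ^ (n + 1)) * rbar
          = a • (rbar * hbar ^ (n + 1)) := by
        rw [map_mul, map_pow, Polynomial.aeval_C, Polynomial.aeval_X,
          Algebra.algebraMap_eq_smul_one, smul_mul_assoc, smul_mul_assoc, one_mul,
          mul_comm (hbar ^ (n + 1)) rbar]
      rw [h]
      exact Submodule.smul_mem _ _ (mem_span_pow (n + 1))

lemma two_smul_gen (i : ℕ) : (2 : ℤ_[2]) • (rbar * hbar ^ i) = 0 := by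
  rw [two_smul, ← add_mul, ← two_mul, two_mul_rbar, zero_mul]

lemma two_mem_nzd : (2 : ℤ_[2]) ∈ nonZeroDivisors ℤ_[2] :=
  mem_nonZeroDivisors_of_ne_zero (by norm_num)

lemma gen_torsion (i : ℕ) :
    (⟨2, two_mem_nzd⟩ : nonZeroDivisors ℤ_[2]) • (rbar * hbar ^ i) = 0 := by
  rw [Submonoid.mk_smul]
  exact two_smul_gen i

lemma torsion_eq : Submodule.torsion ℤ_[2] RQ5 = Submodule.span ℤ_[2] Sgen := by
  apply le_antisymm
  · intro x hx
    obtain ⟨⟨a, ha⟩, hax⟩ := hx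
    have ha0 : a ≠ 0 := nonZeroDivisors.ne_zero ha
    have h1 : a • ψ x = 0 := by
      rw [← map_smul]
      rw [show a • x = 0 from hax, map_zero]
    have hfst : (ψ x).fst = 0 := by
      have h2 : a • (ψ x).fst = 0 := by rw [← TrivSqZeroExt.fst_smul, h1]; rfl
      haveI := bA.isTorsionFree
      rcases smul_eq_zero.mp h2 with h | h
      · exact absurd h ha0
      · exact h
    have hx2 : x = σT (ψ x).snd := by
      conv_lhs => rw [← σψ x, σ_apply, hfst, map_zero, zero_add]
    rw [hx2]
    exact σT_mem_span _
  · rw [Submodule.span_le]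
    rintro y (rfl | rfl | rfl)
    · exact ⟨⟨2, two_mem_nzd⟩, by rw [gen_eq0]; exact gen_torsion 0⟩
    · exact ⟨⟨2, two_mem_nzd⟩, by rw [gen_eq1]; exact gen_torsion 1⟩
    · exact ⟨⟨2, two_mem_nzd⟩, by rw [gen_eq2]; exact gen_torsion 2⟩

noncomputable abbrev Z2Q := ℤ_[2] ⧸ (Ideal.span {2} : Ideal ℤ_[2])

noncomputable def g : Fin 3 → RQ5 := fun i => rbar * hbar ^ (i : ℕ)

noncomputable def qmap (i : Fin 3) : Z2Q →ₗ[ℤ_[2]] RQ5 :=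
  Submodule.liftQ _ (LinearMap.toSpanSingleton ℤ_[2] RQ5 (g i)) (by
    intro x hx
    obtain ⟨c, rfl⟩ := Ideal.mem_span_singleton'.mp hx
    simp only [LinearMap.mem_ker, LinearMap.toSpanSingleton_apply]
    rw [mul_smul, g]
    rw [two_smul_gen, smul_zero])

lemma qmap_mk (i : Fin 3) (a : ℤ_[2]) :
    qmap i (Submodule.Quotient.mk a) = a • g i := by
  rw [qmap, Submodule.liftQ_apply, LinearMap.toSpanSingleton_apply]

noncomputable def G : (Fin 3 → Z2Q) →ₗ[ℤ_[2]] RQ5 :=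
  ∑ i, (qmap i).comp (LinearMap.proj i)

lemma G_apply (c : Fin 3 → Z2Q) : G c = qmap 0 (c 0) + qmap 1 (c 1) + qmap 2 (c 2) := by
  simp [G, Fin.sum_univ_three]

lemma ψ_gen (n : ℕ) :
    ψ (rbar * hbar ^ n) = TrivSqZeroExt.inr (Ideal.Quotient.mk J (ρ ^ n)) := by
  have h : rbar * hbar ^ n = Ideal.Quotient.mk Iq (X 1 * X 0 ^ n) := by
    rw [map_mul, map_pow]; rfl
  rw [h, ψ_mk, map_mul, map_pow, φ_X0, φ_X1, TrivSqZeroExt.inl_pow,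
    TrivSqZeroExt.inr_mul_inl, op_smul_eq_smul, inr_smul_one]

lemma rho_pow_mk (n : ℕ) : (ρ : A) ^ n = AdjoinRoot.mk _ (Polynomial.X ^ n) := by
  rw [map_pow, AdjoinRoot.mk_X]

lemma smul_mk_rho (a : ℤ_[2]) (n : ℕ) :
    a • (Ideal.Quotient.mk J (ρ ^ n) : T)
      = Ideal.Quotient.mk J (AdjoinRoot.mk _ (Polynomial.C a * Polynomial.X ^ n)) := by
  have h0 : (Ideal.Quotient.mk J (a • (ρ ^ n)) : T) = a • Ideal.Quotient.mk J (ρ ^ n) :=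
    Submodule.Quotient.mk_smul J a _
  rw [← h0, rho_pow_mk, AdjoinRoot.smul_mk, Polynomial.smul_eq_C_mul]

lemma a_mem_two (a : Fin 3 → ℤ_[2])
    (h : a 0 • g 0 + a 1 • g 1 + a 2 • g 2 = 0) :
    ∀ i, a i ∈ (Ideal.span {2} : Ideal ℤ_[2]) := by
  have h1 : (ψ (a 0 • g 0 + a 1 • g 1 + a 2 • g 2)).snd = 0 := by
    rw [h, map_zero]; rfl
  rw [map_add, map_add, map_smul, map_smul, map_smul] at h1
  simp only [g, Fin.val_zero, Fin.val_one, Fin.val_two] at h1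
  rw [ψ_gen 0, ψ_gen 1, ψ_gen 2] at h1
  rw [TrivSqZeroExt.snd_add, TrivSqZeroExt.snd_add, TrivSqZeroExt.snd_smul,
    TrivSqZeroExt.snd_smul, TrivSqZeroExt.snd_smul, TrivSqZeroExt.snd_inr,
    TrivSqZeroExt.snd_inr, TrivSqZeroExt.snd_inr] at h1
  rw [smul_mk_rho, smul_mk_rho, smul_mk_rho, ← map_add, ← map_add, ← map_add,
    ← map_add] at h1
  set Pq : Polynomial ℤ_[2] := Polynomial.C (a 0) * Polynomial.X ^ (0 : ℕ)
      + Polynomial.C (a 1) * Polynomial.X ^ (1 : ℕ)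
      + Polynomial.C (a 2) * Polynomial.X ^ (2 : ℕ) with hPq
  have h2 : (AdjoinRoot.mk _ Pq : A) ∈ J :=
    Ideal.Quotient.eq_zero_iff_mem.mp h1
  obtain ⟨u, v, huv⟩ := Ideal.mem_span_pair.mp h2
  obtain ⟨U, rfl⟩ := AdjoinRoot.mk_surjective u
  obtain ⟨V, rfl⟩ := AdjoinRoot.mk_surjective v
  have h3 : (AdjoinRoot.mk _ (U * 2 + V * Polynomial.X ^ 3) : A) = AdjoinRoot.mk _ Pq := by
    rw [map_add, map_mul, map_mul, map_ofNat, map_pow, AdjoinRoot.mk_X]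
    exact huv
  obtain ⟨W, hW⟩ := AdjoinRoot.mk_eq_mk.mp h3
  have h4 : Pq = U * 2 + V * Polynomial.X ^ 3 - Polynomial.X ^ 6 * W := by
    linear_combination -hW
  have key : ∀ k : ℕ, k < 3 → Pq.coeff k = U.coeff k * 2 := by
    intro k hk
    have hc := congrArg (fun P => Polynomial.coeff P k) h4
    simp only [Polynomial.coeff_add, Polynomial.coeff_sub] at hc
    rw [show (2 : Polynomial ℤ_[2]) = Polynomial.C 2 from (by rw [map_ofNat]),
      Polynomial.coeff_mul_C, Polynomial.coeff_mul_X_pow',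
      mul_comm (Polynomial.X ^ 6) W, Polynomial.coeff_mul_X_pow'] at hc
    rw [if_neg (by omega), if_neg (by omega)] at hc
    simpa using hc
  intro i
  have hcoef : ∀ k : ℕ, (hk : k < 3) → Pq.coeff k = a ⟨k, hk⟩ := by
    intro k hk
    rw [hPq]
    interval_cases k <;>
      simp [Polynomial.coeff_add, Polynomial.coeff_C_mul, Polynomial.coeff_X_pow,
        Polynomial.coeff_C]
  fin_cases i <;>
    [ (have := key 0 (by omega); rw [hcoef 0 (by omega)] at this);
      (have := key 1 (by omega); rw [hcoef 1 (by omega)] at this);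
      (have := key 2 (by omega); rw [hcoef 2 (by omega)] at this)] <;>
    exact Ideal.mem_span_singleton'.mpr ⟨_, this.symm⟩

lemma G_ker : ∀ c, G c = 0 → c = 0 := by
  intro c hc
  have hrep : ∀ i, ∃ a : ℤ_[2], Submodule.Quotient.mk a = c i :=
    fun i => Submodule.Quotient.mk_surjective _ (c i)
  choose a ha using hrep
  rw [G_apply, ← ha 0, ← ha 1, ← ha 2, qmap_mk, qmap_mk, qmap_mk] at hc
  have hm := a_mem_two a hc
  funext i
  rw [← ha i, Pi.zero_apply, Submodule.Quotient.mk_eq_zero]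
  exact hm i

lemma G_range : LinearMap.range G = Submodule.span ℤ_[2] Sgen := by
  apply le_antisymm
  · rintro _ ⟨c, rfl⟩
    rw [G_apply]
    refine Submodule.add_mem _ (Submodule.add_mem _ ?_ ?_) ?_
    · obtain ⟨b, hb⟩ := Submodule.Quotient.mk_surjective _ (c 0)
      rw [← hb, qmap_mk]
      exact Submodule.smul_mem _ _ (mem_span_pow _)
    · obtain ⟨b, hb⟩ := Submodule.Quotient.mk_surjective _ (c 1)
      rw [← hb, qmap_mk]
      exact Submodule.smul_mem _ _ (mem_span_pow _)
    · obtain ⟨b, hb⟩ := Submodule.Quotient.mk_surjective _ (c 2)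
      rw [← hb, qmap_mk]
      exact Submodule.smul_mem _ _ (mem_span_pow _)
  · rw [Submodule.span_le]
    rintro y (rfl | rfl | rfl)
    · refine ⟨Pi.single 0 (Submodule.Quotient.mk 1), ?_⟩
      rw [G_apply]
      simp only [Pi.single_eq_same, Pi.single_eq_of_ne (by decide : (1:Fin 3) ≠ 0),
        Pi.single_eq_of_ne (by decide : (2:Fin 3) ≠ 0), map_zero, add_zero, qmap_mk,
        one_smul]
      exact gen_eq0.symm
    · refine ⟨Pi.single 1 (Submodule.Quotient.mk 1), ?_⟩
      rw [G_apply]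
      simp only [Pi.single_eq_same, Pi.single_eq_of_ne (by decide : (0:Fin 3) ≠ 1),
        Pi.single_eq_of_ne (by decide : (2:Fin 3) ≠ 1), map_zero, add_zero, zero_add,
        qmap_mk, one_smul]
      exact gen_eq1.symm
    · refine ⟨Pi.single 2 (Submodule.Quotient.mk 1), ?_⟩
      rw [G_apply]
      simp only [Pi.single_eq_same, Pi.single_eq_of_ne (by decide : (0:Fin 3) ≠ 2),
        Pi.single_eq_of_ne (by decide : (1:Fin 3) ≠ 2), map_zero, zero_add, qmap_mk,
        one_smul]
      exact gen_eq2.symm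

noncomputable def Gres : (Fin 3 → Z2Q) →ₗ[ℤ_[2]] (Submodule.torsion ℤ_[2] RQ5) :=
  G.codRestrict _ (fun c => by
    rw [torsion_eq, ← G_range]; exact ⟨c, rfl⟩)

lemma Gres_bij : Function.Bijective Gres := by
  constructor
  · intro c d h
    have h2 : G c = G d := congrArg Subtype.val h
    have h3 : G (c - d) = 0 := by rw [map_sub, h2, sub_self]
    have := G_ker _ h3
    rwa [sub_eq_zero] at this
  · rintro ⟨x, hx⟩
    rw [torsion_eq, ← G_range] at hx
    obtain ⟨c, hc⟩ := hx
    exact ⟨c, Subtype.ext hc⟩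

end Q5aux

/-- The torsion submodule of `R = ℤ₂[h, r]/(h⁶, 2r, rh³, r²)` as a `ℤ₂`-module is
spanned by `r, rh, rh²` and is isomorphic to `(ℤ/2)³`. -/
theorem etale_cohomology_Q5_torsion :
    Submodule.torsion ℤ_[2] RQ5 =
      Submodule.span ℤ_[2]
        ({Ideal.Quotient.mk _ (X 1), Ideal.Quotient.mk _ (X 1 * X 0),
          Ideal.Quotient.mk _ (X 1 * X 0 ^ 2)} : Set RQ5) ∧
    Nonempty ((Submodule.torsion ℤ_[2] RQ5) ≃ₗ[ℤ_[2]]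
      (Fin 3 → (ℤ_[2] ⧸ (Ideal.span {2} : Ideal ℤ_[2])))) := by
  constructor
  · exact Q5aux.torsion_eq
  · exact ⟨(LinearEquiv.ofBijective Q5aux.Gres Q5aux.Gres_bij).symm⟩
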